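/- Let T be a finite rooted tree with root r and f: N(T) -> R strictly increasing along edges directed away from r. Then there is a bijection between the intervals of TMD(T,f) and the leaves of T, under which each leaf l corresponds to an interval whose right endpoint equals f(l). -/

import Mathlib

/-- A finite rooted tree, with a real number (the value of a function `f`,
e.g. a distance from the root) attached to each node. -/
inductive RTree : Type where
  | node (val : ℝ) (children : List RTree)

namespace RTree

/-- The value of `f` at the root. -/
def rootVal : RTree → ℝ
  | node x _ => x

/-- The maximal value of `f` on the subtree (under a function increasing away
from the root, this is the maximal value of `f` on the leaves). -/
def maxLeaf : RTree → ℝ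
  | node x ts => ts.attach.foldr (fun c m => max (maxLeaf c.1) m) x
  decreasing_by
    have := List.sizeOf_lt_of_mem c.2
    simp only [RTree.node.sizeOf_spec] at *
    omega

/-- `f` is strictly increasing along edges directed away from the root. -/
inductive Increasing : RTree → Prop
  | node {x ts} : (∀ c ∈ ts, x < rootVal c) → (∀ c ∈ ts, Increasing c) →
      Increasing (node x ts)

/-- The bars of the TMD algorithm other than the final bar `[f(r), L]`:
at each branch point, every detached child branch contributes a bar
`(f(branch point), max of f on the leaves of the branch]`; equivalently, each
child contributes such a candidate bar and one copy of a maximal one (the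
branch that stays attached) is removed. -/
noncomputable def tmdAux : RTree → Multiset (ℝ × ℝ)
  | node x ts =>
    (↑(ts.map fun c => (x, maxLeaf c)) - {(x, maxLeaf (node x ts))})
      + (ts.attach.map fun c => tmdAux c.1).sum
  decreasing_by
    have := List.sizeOf_lt_of_mem c.2
    simp only [RTree.node.sizeOf_spec] at *
    omega

/-- The topological morphology descriptor barcode, as a multiset of pairs
(left endpoint, right endpoint). -/
noncomputable def tmd (T : RTree) : Multiset (ℝ × ℝ) :=
  (T.rootVal, T.maxLeaf) ::ₘ T.tmdAux

/-- The multiset of values of `f` at the leaves. -/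
def leafVals : RTree → Multiset ℝ
  | node x ts =>
    if ts.isEmpty then {x}
    else (ts.attach.map fun c => leafVals c.1).sum
  decreasing_by
    have := List.sizeOf_lt_of_mem c.2
    simp only [RTree.node.sizeOf_spec] at *
    omega

end RTree


section AuxLemmas

lemma foldr_attach' {α β : Type*} (l : List α) (f : α → β → β) (b : β) :
    l.attach.foldr (fun c m => f c.1 m) b = l.foldr f b := by
  rw [← List.foldr_map (f := Subtype.val) (g := f), List.attach_map_subtype_val]

lemma foldr_max_le_mem {l : List ℝ} {x : ℝ} (hl : l ≠ [])
    (hx : ∀ a ∈ l, x < a) : l.foldr max x ∈ l := by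
  induction l with
  | nil => exact absurd rfl hl
  | cons a t ih =>
    cases t with
    | nil =>
      simp only [List.foldr_cons, List.foldr_nil]
      have : x < a := hx a (by simp)
      simp [max_eq_left this.le]
    | cons b u =>
      have hmem : (b :: u).foldr max x ∈ b :: u :=
        ih (by simp) (fun c hc => hx c (List.mem_cons_of_mem _ hc))
      rcases max_choice a ((b :: u).foldr max x) with h | h
      · simp only [List.foldr_cons] at *
        rw [h]; exact List.mem_cons_self
      · simp only [List.foldr_cons] at *
        rw [h]; exact List.mem_cons_of_mem _ hmem

lemma le_foldr_max (l : List ℝ) (x : ℝ) : x ≤ l.foldr max x := by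
  induction l with
  | nil => simp
  | cons a t ih => exact ih.trans (le_max_right _ _)

lemma map_listSum {α β : Type*} (f : α → β) (l : List (Multiset α)) :
    (l.sum).map f = (l.map (Multiset.map f)).sum := by
  induction l with
  | nil => simp
  | cons a t ih => simp [ih]

lemma listSum_cons {α β : Type*} (g : α → β) (h : α → Multiset β) (l : List α) :
    (l.map fun c => g c ::ₘ h c).sum = ↑(l.map g) + (l.map h).sum := by
  induction l with
  | nil => simp
  | cons a t ih =>
    simp only [List.map_cons, List.sum_cons, ih]
    rw [← Multiset.cons_coe, ← Multiset.singleton_add, ← Multiset.singleton_add]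
    abel

end AuxLemmas

namespace RTree

lemma maxLeaf_node (x : ℝ) (ts : List RTree) :
    maxLeaf (node x ts) = (ts.map maxLeaf).foldr max x := by
  rw [maxLeaf, List.foldr_map]
  exact foldr_attach' ts (fun c m => max (maxLeaf c) m) x

lemma rootVal_le_maxLeaf (T : RTree) : rootVal T ≤ maxLeaf T := by
  obtain ⟨x, ts⟩ := T
  rw [rootVal, maxLeaf_node]
  exact le_foldr_max _ _

lemma maxLeaf_mem {x : ℝ} {ts : List RTree} (hts : ts ≠ [])
    (h : ∀ c ∈ ts, x < rootVal c) :
    maxLeaf (node x ts) ∈ ts.map maxLeaf := by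
  rw [maxLeaf_node]
  apply foldr_max_le_mem (by simpa using hts)
  intro a ha
  obtain ⟨c, hc, rfl⟩ := List.mem_map.1 ha
  exact lt_of_lt_of_le (h c hc) (rootVal_le_maxLeaf c)

theorem tmd_main : ∀ (T : RTree), Increasing T → (tmd T).map Prod.snd = leafVals T
  | node x ts, hT => by
    obtain ⟨hlt, hinc⟩ : (∀ c ∈ ts, x < rootVal c) ∧ (∀ c ∈ ts, Increasing c) := by
      cases hT with | node h1 h2 => exact ⟨h1, h2⟩
    have ih : ∀ c ∈ ts, (tmd c).map Prod.snd = leafVals c := fun c hc =>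
      have := List.sizeOf_lt_of_mem hc
      tmd_main c (hinc c hc)
    by_cases hts : ts = []
    · subst hts
      simp [tmd, tmdAux, leafVals, maxLeaf]
    · rw [tmd, leafVals]
      rw [if_neg (by simpa using hts)]
      rw [List.attach_map_val (l := ts) (f := leafVals)]
      have hrw : ∀ c ∈ ts, leafVals c = maxLeaf c ::ₘ (tmdAux c).map Prod.snd := by
        intro c hc
        rw [← ih c hc, tmd, Multiset.map_cons]
      rw [List.map_congr_left hrw, listSum_cons]
      rw [Multiset.map_cons, rootVal, tmdAux, Multiset.map_add]
      rw [List.attach_map_val (l := ts) (f := tmdAux), map_listSum, List.map_map]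
      have hmem : (x, maxLeaf (node x ts)) ∈ (↑(ts.map fun c => (x, maxLeaf c)) : Multiset (ℝ × ℝ)) := by
        rw [Multiset.mem_coe, List.mem_map]
        obtain ⟨c, hc, hcm⟩ := List.mem_map.1 (maxLeaf_mem hts hlt)
        exact ⟨c, hc, by rw [hcm]⟩
      rw [Multiset.sub_singleton]
      have hkey : maxLeaf (node x ts) ::ₘ
          ((↑(ts.map fun c => (x, maxLeaf c)) : Multiset (ℝ × ℝ)).erase
            (x, maxLeaf (node x ts))).map Prod.snd
          = (↑(ts.map fun c => (x, maxLeaf c)) : Multiset (ℝ × ℝ)).map Prod.snd := by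
        conv_rhs => rw [← Multiset.cons_erase hmem]
        rw [Multiset.map_cons]
      rw [← Multiset.cons_add, hkey]
      congr 1
      rw [Multiset.map_coe, List.map_map]
      rfl
  decreasing_by
    simp only [RTree.node.sizeOf_spec] at *
    omega

end RTree

open RTree in
/-- For a finite rooted tree `T` with `f` strictly increasing along
edges directed away from the root, there is a bijection between the intervals of
`TMD(T,f)` and the leaves of `T` sending each leaf `l` to an interval with right
endpoint `f(l)`; equivalently, the multiset of right endpoints of `TMD(T,f)`
equals the multiset of `f`-values of the leaves. -/
theorem tmd_bars_biject_leaves (T : RTree) (hT : Increasing T) :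
    (tmd T).map Prod.snd = leafVals T := RTree.tmd_main T hT
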